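/- arXiv:1007.2616 — 2 statements merged into one kernel-verified Lean document; each statement's English description precedes it below -/
import Mathlib

section
/- Let a locally compact group $G$ act freely and properly on a topological graph $E = (E^0, E^1, s, r)$, let $q : E^1 \to E^1/G$ be the quotient map, and let $K \subseteq E^1/G$ be compact. Then there exists $d \geq 0$ such that for every vertex $v \in E^0$, the set $q^{-1}(K) \cap s^{-1}(v)$ has at most $d$ elements. -/
/-!
Pick a compact `C ⊆ E¹` whose image covers `K`, so that every edge in `q⁻¹(K)` is moved into `C`
by some group element. Fix `e₀` in the fiber `q⁻¹(K) ∩ s⁻¹(v)` and `g₀` with `g₀ • e₀ ∈ C`. For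
any other `e` in that fiber with `g • e ∈ C`, the element `g₀ * g⁻¹` maps a point of the compact
set `s(C)` into `s(C)`, so by properness it lies in a compact `W ⊆ G` independent of `v`. Hence
`g₀` carries the fiber into `(W • C) ∩ s⁻¹(g₀ • v)`, and the fibers of `s` over the compact set
`W • C` are uniformly bounded, since a locally injective map is injective on each member of a
finite open cover of `W • C`.
-/

open Set Pointwise Topology

theorem IsLocallyInjective.exists_encard_inter_preimage_singleton_le {X Y : Type*}
    [TopologicalSpace X] {f : X → Y} (hf : IsLocallyInjective f) {D : Set X}
    (hD : IsCompact D) : ∃ d : ℕ, ∀ y : Y, (D ∩ f ⁻¹' {y}).encard ≤ d := by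
  choose U hUopen hmemU hUinj using hf
  obtain ⟨t, hDt⟩ := hD.elim_finite_subcover U hUopen fun x _ => mem_iUnion.2 ⟨x, hmemU x⟩
  refine ⟨t.card, fun y => ?_⟩
  have hpiece : ∀ x, (U x ∩ f ⁻¹' {y}).encard ≤ 1 := fun x =>
    encard_le_one_iff.2 fun a b ha hb => hUinj x ha.1 hb.1 (ha.2.trans hb.2.symm)
  calc (D ∩ f ⁻¹' {y}).encard
      ≤ (⋃ x ∈ t, U x ∩ f ⁻¹' {y}).encard := by
        refine encard_le_encard fun a ⟨haD, hay⟩ => ?_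
        obtain ⟨x, hxt, hax⟩ := mem_iUnion₂.1 (hDt haD)
        exact mem_biUnion hxt ⟨hax, hay⟩
    _ ≤ ∑ x ∈ t, (U x ∩ f ⁻¹' {y}).encard := t.set_encard_biUnion_le _
    _ ≤ ∑ _x ∈ t, 1 := Finset.sum_le_sum fun x _ => hpiece x
    _ = t.card := by simp

theorem IsOpenMap.exists_isCompact_image_superset {X Y : Type*} [TopologicalSpace X]
    [TopologicalSpace Y] [WeaklyLocallyCompactSpace X] {f : X → Y} (hf : IsOpenMap f)
    (hsurj : Function.Surjective f) {K : Set Y} (hK : IsCompact K) :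
    ∃ C : Set X, IsCompact C ∧ K ⊆ f '' C := by
  choose N hNcompact hNnhds using fun x : X => exists_compact_mem_nhds x
  have hcover : K ⊆ ⋃ x, f '' interior (N x) := fun k _ => by
    obtain ⟨x, rfl⟩ := hsurj k
    exact mem_iUnion.2 ⟨x, mem_image_of_mem f (mem_interior_iff_mem_nhds.2 (hNnhds x))⟩
  obtain ⟨t, hKt⟩ := hK.elim_finite_subcover _ (fun x => hf _ isOpen_interior) hcover
  refine ⟨⋃ x ∈ t, N x, t.isCompact_biUnion fun x _ => hNcompact x, hKt.trans ?_⟩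
  simp only [image_iUnion]
  exact iUnion₂_mono fun x _ => image_mono interior_subset

section EquivariantFibers

variable {G X Y : Type*} [Group G] [MulAction G X] [MulAction G Y] {s : X → Y}

theorem smul_saturation_inter_preimage_singleton_subset
    (hs : ∀ (g : G) (x : X), s (g • x) = g • s x) {C : Set X} {x₀ : X} {g₀ : G}
    (hx₀ : g₀ • x₀ ∈ C) :
    g₀ • ({x | ∃ g : G, g • x ∈ C} ∩ s ⁻¹' {s x₀}) ⊆
      {g : G | (g • s '' C ∩ s '' C).Nonempty} • C ∩ s ⁻¹' {g₀ • s x₀} := by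
  rintro _ ⟨x, ⟨⟨g, hgx⟩, hsx : s x = s x₀⟩, rfl⟩
  have hmoves : g₀ • s x₀ ∈ (g₀ * g⁻¹) • s '' C ∩ s '' C := by
    refine ⟨⟨s (g • x), mem_image_of_mem s hgx, ?_⟩, ⟨g₀ • x₀, hx₀, hs g₀ x₀⟩⟩
    simp [hs, hsx, smul_smul]
  refine ⟨⟨g₀ * g⁻¹, ⟨_, hmoves⟩, g • x, hgx, by simp [smul_smul]⟩, ?_⟩
  simp [hs, hsx]

theorem IsCompact.exists_encard_saturation_inter_preimage_singleton_le [TopologicalSpace G]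
    [TopologicalSpace X] [TopologicalSpace Y] [ContinuousSMul G X] [ProperSMul G Y]
    (hsc : Continuous s) (hsinj : IsLocallyInjective s)
    (hs : ∀ (g : G) (x : X), s (g • x) = g • s x) {C : Set X} (hC : IsCompact C) :
    ∃ d : ℕ, ∀ y : Y, ({x | ∃ g : G, g • x ∈ C} ∩ s ⁻¹' {y}).encard ≤ d := by
  have hW : IsCompact {g : G | (g • s '' C ∩ s '' C).Nonempty} :=
    ProperSMul.isCompact_setOfPred_inter_nonempty (hC.image hsc) (hC.image hsc)
  obtain ⟨d, hd⟩ := hsinj.exists_encard_inter_preimage_singleton_le (hW.smul_set hC)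
  refine ⟨d, fun y => ?_⟩
  rcases eq_empty_or_nonempty ({x | ∃ g : G, g • x ∈ C} ∩ s ⁻¹' {y}) with
    hempty | ⟨x₀, ⟨g₀, hx₀⟩, rfl⟩
  · simp [hempty]
  calc _ = (g₀ • ({x | ∃ g : G, g • x ∈ C} ∩ s ⁻¹' {s x₀})).encard := (encard_smul_set _ _).symm
    _ ≤ _ := encard_le_encard (smul_saturation_inter_preimage_singleton_subset hs hx₀)
    _ ≤ d := hd _

end EquivariantFibers

theorem stmt6_general {G E0 E1 : Type*} [Group G] [TopologicalSpace G]
    [TopologicalSpace E0] [TopologicalSpace E1]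
    [LocallyCompactSpace E1]
    [MulAction G E0] [MulAction G E1]
    (hc1 : Continuous fun p : G × E1 => p.1 • p.2)
    (hprop0 : IsProperMap fun gp : G × E0 => (gp.1 • gp.2, gp.2))
    (s : E1 → E0) (hs : IsLocalHomeomorph s)
    (hseq : ∀ (g : G) (e : E1), s (g • e) = g • s e)
    (K : Set (Quotient (MulAction.orbitRel G E1))) (hK : IsCompact K) :
    ∃ d : ℕ, ∀ v : E0,
      ((Quotient.mk (MulAction.orbitRel G E1) ⁻¹' K) ∩ s ⁻¹' {v}).Finite ∧
      ((Quotient.mk (MulAction.orbitRel G E1) ⁻¹' K) ∩ s ⁻¹' {v}).ncard ≤ d := by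
  have : ContinuousSMul G E1 := ⟨hc1⟩
  have : ProperSMul G E0 := ⟨hprop0⟩
  have hq := MulAction.isOpenQuotientMap_quotientMk (Γ := G) (T := E1)
  obtain ⟨C, hC, hKC⟩ := hq.isOpenMap.exists_isCompact_image_superset hq.surjective hK
  obtain ⟨d, hd⟩ :=
    hC.exists_encard_saturation_inter_preimage_singleton_le hs.continuous hs.isLocallyInjective hseq
  have hsat : Quotient.mk (MulAction.orbitRel G E1) ⁻¹' K ⊆ {x | ∃ g : G, g • x ∈ C} :=
    fun x hx => by
      obtain ⟨c, hc, hcx⟩ := hKC hx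
      obtain ⟨g, hg⟩ := Quotient.exact hcx
      exact ⟨g, (show g • x = c from hg) ▸ hc⟩
  exact ⟨d, fun v => encard_le_coe_iff_finite_ncard_le.1
    ((encard_le_encard (inter_subset_inter_left _ hsat)).trans (hd v))⟩

/-- If a locally compact group `G` acts freely and properly on a topological
graph `E = (E⁰, E¹, s, r)`, `q : E¹ → E¹/G` is the quotient map and `K ⊆ E¹/G` is compact,
then there is a `d ≥ 0` such that for every vertex `v ∈ E⁰` the set `q⁻¹(K) ∩ s⁻¹(v)` is
finite with at most `d` elements. -/
theorem stmt6 {G E0 E1 : Type*} [Group G] [TopologicalSpace G]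
    [T2Space G] [LocallyCompactSpace G] [IsTopologicalGroup G]
    [TopologicalSpace E0] [TopologicalSpace E1]
    [T2Space E0] [T2Space E1] [LocallyCompactSpace E0] [LocallyCompactSpace E1]
    [MulAction G E0] [MulAction G E1]
    (hc0 : Continuous fun p : G × E0 => p.1 • p.2)
    (hc1 : Continuous fun p : G × E1 => p.1 • p.2)
    (hfree0 : ∀ (g : G) (v : E0), g • v = v → g = 1)
    (hfree1 : ∀ (g : G) (e : E1), g • e = e → g = 1)
    (hprop0 : IsProperMap fun gp : G × E0 => (gp.1 • gp.2, gp.2))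
    (hprop1 : IsProperMap fun gp : G × E1 => (gp.1 • gp.2, gp.2))
    (s r : E1 → E0) (hs : IsLocalHomeomorph s) (hr : Continuous r)
    (hseq : ∀ (g : G) (e : E1), s (g • e) = g • s e)
    (hreq : ∀ (g : G) (e : E1), r (g • e) = g • r e)
    (K : Set (Quotient (MulAction.orbitRel G E1))) (hK : IsCompact K) :
    ∃ d : ℕ, ∀ v : E0,
      ((Quotient.mk (MulAction.orbitRel G E1) ⁻¹' K) ∩ s ⁻¹' {v}).Finite ∧
      ((Quotient.mk (MulAction.orbitRel G E1) ⁻¹' K) ∩ s ⁻¹' {v}).ncard ≤ d :=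
  stmt6_general hc1 hprop0 s hs hseq K hK
end

section
/- Let $E$ be a topological graph, $G$ a locally compact group acting freely and properly on $E$, with quotient graph $F = E/G$ and quotient map $q$. For $\xi \in C_c(F^1)$, the formula $(\mu(\xi)\cdot f)(e) = \xi(q(e)) f(s(e))$, for $f \in C_c(E^0)$, defines an element $\mu(\xi)\cdot f \in C_c(E^1)$, and for every $v \in E^0$ one has $\langle \mu(\xi)\cdot f, \mu(\xi)\cdot f\rangle(v) = \langle \xi, \xi\rangle(q(v)) |f(v)|^2$; in particular $\|\mu(\xi)\cdot f\| \leq \|\xi\| \|f\|$ in the Hilbert module $\mathcal H(E)$. -/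
/-!
Freeness of the action on `E⁰` and equivariance of `s` make the quotient map a bijection from
`s⁻¹(v)` onto the fibre of `F¹` over `q(v)`, which gives the inner-product identity. Properness
of the action on `E⁰` makes `q⁻¹(K) ∩ s⁻¹(L)` compact for compact `K ⊆ F¹`, `L ⊆ E⁰`; this gives
the compact support of `μ(ξ)·f`, and, since a local homeomorphism meets each fibre in boundedly
many points of a compact set, a uniform bound on `⟨ξ,ξ⟩`. That bound is what makes the norm
inequality meaningful: a real `⨆` of an unbounded family is `0`.
-/

open Set Function

theorem IsOpenMap.exists_isCompact_subset_image {X Y : Type*} [TopologicalSpace X]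
    [LocallyCompactSpace X] [TopologicalSpace Y] {π : X → Y} (hπo : IsOpenMap π)
    (hπs : Surjective π) {K : Set Y} (hK : IsCompact K) :
    ∃ C : Set X, IsCompact C ∧ K ⊆ π '' C := by
  choose x hx using hπs
  choose N hNc hN using fun y : Y => exists_compact_mem_nhds (x y)
  obtain ⟨t, -, hKt⟩ := hK.elim_nhds_subcover (fun y => π '' N y)
    fun y _ => by simpa only [hx] using hπo.image_mem_nhds (hN y)
  refine ⟨⋃ y ∈ t, N y, t.isCompact_biUnion fun y _ => hNc y, ?_⟩
  rw [image_iUnion₂]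
  exact hKt

theorem IsLocallyInjective.exists_encard_inter_fiber_le {X Y : Type*} [TopologicalSpace X]
    {s : X → Y} (hs : IsLocallyInjective s) {K : Set X} (hK : IsCompact K) :
    ∃ n : ℕ, ∀ y, (K ∩ s ⁻¹' {y}).encard ≤ n := by
  choose U hUo hxU hUinj using hs
  obtain ⟨t, hKt⟩ := hK.elim_finite_subcover U hUo fun x _ => mem_iUnion.2 ⟨x, hxU x⟩
  refine ⟨t.card, fun y => ?_⟩
  calc (K ∩ s ⁻¹' {y}).encard
      ≤ (⋃ x ∈ t, U x ∩ s ⁻¹' {y}).encard := by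
        refine encard_le_encard fun e ⟨heK, hey⟩ => ?_
        obtain ⟨x, hxt, hex⟩ := mem_iUnion₂.1 (hKt heK)
        exact mem_iUnion₂.2 ⟨x, hxt, hex, hey⟩
    _ ≤ ∑ x ∈ t, (U x ∩ s ⁻¹' {y}).encard := t.set_encard_biUnion_le _
    _ ≤ ∑ _x ∈ t, 1 := Finset.sum_le_sum fun x _ => encard_le_one_iff.2
        fun a b ha hb => hUinj x ha.1 hb.1 (ha.2.trans hb.2.symm)
    _ = t.card := by simp

theorem tsum_le_mul_of_encard_support_le {α : Type*} {f : α → ℝ} {M : ℝ} {n : ℕ}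
    (hM : 0 ≤ M) (hfM : ∀ a, f a ≤ M) (hn : (support f).encard ≤ n) :
    ∑' a, f a ≤ n * M := by
  have hfin : (support f).Finite := finite_of_encard_le_coe hn
  rw [tsum_eq_sum (s := hfin.toFinset) fun a ha => by simpa using ha]
  calc ∑ a ∈ hfin.toFinset, f a ≤ hfin.toFinset.card * M := by
        simpa using Finset.sum_le_card_nsmul _ _ M fun a _ => hfM a
    _ ≤ n * M := by
        gcongr
        rw [← ncard_eq_toFinset_card _ hfin, ← Nat.cast_le (α := ℕ∞), hfin.cast_ncard_eq]
        exact hn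

theorem Real.iSup_comp_mul_le_iSup_mul_iSup {ι κ : Type*} (p : ι → κ) {a : κ → ℝ} {b : ι → ℝ}
    (ha0 : ∀ k, 0 ≤ a k) (hb0 : ∀ i, 0 ≤ b i) (ha : BddAbove (range a))
    (hb : BddAbove (range b)) :
    ⨆ i, a (p i) * b i ≤ (⨆ k, a k) * ⨆ i, b i :=
  Real.iSup_le (fun i => mul_le_mul (le_ciSup ha (p i)) (le_ciSup hb i) (hb0 i)
    (Real.iSup_nonneg ha0)) (mul_nonneg (Real.iSup_nonneg ha0) (Real.iSup_nonneg hb0))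

open scoped Pointwise

section QuotientFibers

variable {G X Y : Type*} [Group G] [MulAction G X] [MulAction G Y] {s : X → Y}

theorem isCompact_quotientMk_preimage_inter_preimage [TopologicalSpace G] [TopologicalSpace X]
    [TopologicalSpace Y] [LocallyCompactSpace X] [ContinuousSMul G X] [ProperSMul G Y]
    [T2Space Y] (hs : Continuous s) (hseq : ∀ (g : G) (x : X), s (g • x) = g • s x)
    {K : Set (Quotient (MulAction.orbitRel G X))} (hKc : IsClosed K) (hK : IsCompact K)
    {L : Set Y} (hL : IsCompact L) :
    IsCompact (Quotient.mk _ ⁻¹' K ∩ s ⁻¹' L) := by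
  obtain ⟨C, hC, hKC⟩ :=
    MulAction.isOpenQuotientMap_quotientMk.isOpenMap.exists_isCompact_subset_image
      Quotient.mk_surjective hK
  have hΓ : IsCompact {g : G | (g • (s '' C) ∩ L).Nonempty} :=
    ProperSMul.isCompact_setOfPred_inter_nonempty (hC.image hs) hL
  refine ((hΓ.prod hC).image continuous_smul).of_isClosed_subset
    ((hKc.preimage continuous_quotient_mk').inter (hL.isClosed.preimage hs)) ?_
  -- a point `x` of the set is `g⁻¹ • c` with `c ∈ C` and `g⁻¹ ∈ Γ`, as `g⁻¹ • s c = s x ∈ L`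
  rintro x ⟨hxK, hxL⟩
  obtain ⟨c, hcC, hcx⟩ := hKC hxK
  obtain ⟨g, rfl⟩ := MulAction.orbitRel_apply.1 (Quotient.exact hcx)
  have hsx : g⁻¹ • s (g • x) = s x := by rw [hseq, inv_smul_smul]
  exact ⟨(g⁻¹, g • x), ⟨⟨s x, hsx ▸ smul_mem_smul_set (mem_image_of_mem s hcC), hxL⟩, hcC⟩,
    inv_smul_smul g x⟩

noncomputable def quotientFiberEquiv (hfree : ∀ (g : G) (y : Y), g • y = y → g = 1)
    (hseq : ∀ (g : G) (x : X), s (g • x) = g • s x)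
    {sbar : Quotient (MulAction.orbitRel G X) → Quotient (MulAction.orbitRel G Y)}
    (hsbar : ∀ x, sbar (Quotient.mk _ x) = Quotient.mk _ (s x)) (y : Y) :
    {x : X // s x = y} ≃ {w // sbar w = Quotient.mk _ y} := by
  refine Equiv.ofBijective (fun x => ⟨Quotient.mk _ x.1, by rw [hsbar, x.2]⟩) ⟨?_, ?_⟩
  · rintro ⟨a, ha⟩ ⟨b, hb⟩ hab
    obtain ⟨g, hg⟩ := MulAction.mem_orbit_iff.1
      (MulAction.orbitRel_apply.1 (Quotient.exact (congrArg Subtype.val hab)))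
    exact Subtype.ext (by rw [← hg, hfree g (s b) (by rw [← hseq, hg, ha, hb]), one_smul])
  · rintro ⟨w, hw⟩
    obtain ⟨x, rfl⟩ := Quotient.mk_surjective w
    obtain ⟨g, hg⟩ := MulAction.orbitRel_apply.1 (Quotient.exact ((hsbar x).symm.trans hw))
    refine ⟨⟨g⁻¹ • x, by rw [hseq, ← hg, inv_smul_smul]⟩, Subtype.ext ?_⟩
    exact Quotient.sound (MulAction.mem_orbit x g⁻¹)

theorem tsum_quotient_fiber_eq {M : Type*} [AddCommMonoid M] [TopologicalSpace M]
    (hfree : ∀ (g : G) (y : Y), g • y = y → g = 1)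
    (hseq : ∀ (g : G) (x : X), s (g • x) = g • s x)
    {sbar : Quotient (MulAction.orbitRel G X) → Quotient (MulAction.orbitRel G Y)}
    (hsbar : ∀ x, sbar (Quotient.mk _ x) = Quotient.mk _ (s x))
    (φ : Quotient (MulAction.orbitRel G X) → M) (y : Y) :
    ∑' w : {w // sbar w = Quotient.mk _ y}, φ w = ∑' x : {x : X // s x = y}, φ (Quotient.mk _ x) :=
  ((quotientFiberEquiv hfree hseq hsbar y).tsum_eq (fun w => φ w)).symm

theorem exists_tsum_quotient_fiber_le [TopologicalSpace G] [TopologicalSpace X]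
    [TopologicalSpace Y] [LocallyCompactSpace X] [ContinuousSMul G X] [ProperSMul G Y]
    [T2Space Y] (hfree : ∀ (g : G) (y : Y), g • y = y → g = 1) (hs : IsLocalHomeomorph s)
    (hseq : ∀ (g : G) (x : X), s (g • x) = g • s x)
    {sbar : Quotient (MulAction.orbitRel G X) → Quotient (MulAction.orbitRel G Y)}
    (hsbar : ∀ x, sbar (Quotient.mk _ x) = Quotient.mk _ (s x))
    {φ : Quotient (MulAction.orbitRel G X) → ℝ} (hφ : Continuous φ) (hφs : HasCompactSupport φ) :
    ∃ M, ∀ w₀, ∑' w : {w // sbar w = w₀}, φ w ≤ M := by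
  obtain ⟨C, hC, hφC⟩ :=
    MulAction.isOpenQuotientMap_quotientMk.isOpenMap.exists_isCompact_subset_image
      Quotient.mk_surjective hφs
  obtain ⟨n, hn⟩ := hs.isLocallyInjective.exists_encard_inter_fiber_le
    (isCompact_quotientMk_preimage_inter_preimage hs.continuous hseq (isClosed_tsupport φ) hφs
      (hC.image hs.continuous))
  obtain ⟨B, hB⟩ := hφ.bounded_above_of_compact_support hφs
  refine ⟨n * max B 0, fun w₀ => ?_⟩
  by_cases h : ∃ w, sbar w = w₀ ∧ φ w ≠ 0
  · obtain ⟨w, rfl, hw⟩ := h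
    obtain ⟨c, hcC, rfl⟩ := hφC (subset_tsupport φ hw)
    rw [hsbar, tsum_quotient_fiber_eq hfree hseq hsbar]
    refine tsum_le_mul_of_encard_support_le (le_max_right _ _)
      (fun x => (Real.le_norm_self _).trans ((hB _).trans (le_max_left _ _))) ?_
    rw [← Subtype.val_injective.encard_image]
    refine (encard_le_encard ?_).trans (hn (s c))
    rintro _ ⟨x, hx, rfl⟩
    exact ⟨⟨subset_tsupport _ hx, c, hcC, x.2.symm⟩, x.2⟩
  · push Not at h
    rw [tsum_congr fun w : {w // sbar w = w₀} => h w.1 w.2, tsum_zero]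
    positivity

end QuotientFibers

theorem stmt18_general {G E0 E1 : Type*} [Group G] [TopologicalSpace G]
    [TopologicalSpace E0] [TopologicalSpace E1]
    [T2Space E0] [LocallyCompactSpace E1]
    [MulAction G E0] [MulAction G E1]
    (hc1 : Continuous fun p : G × E1 => p.1 • p.2)
    (hfree0 : ∀ (g : G) (v : E0), g • v = v → g = 1)
    (hprop0 : IsProperMap fun gp : G × E0 => (gp.1 • gp.2, gp.2))
    (s : E1 → E0) (hs : IsLocalHomeomorph s)
    (hseq : ∀ (g : G) (e : E1), s (g • e) = g • s e)
    -- the induced source map of the quotient graph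
    (sbar : Quotient (MulAction.orbitRel G E1) → Quotient (MulAction.orbitRel G E0))
    (hsbar : ∀ e : E1, sbar (Quotient.mk (MulAction.orbitRel G E1) e)
        = Quotient.mk (MulAction.orbitRel G E0) (s e))
    -- `ξ ∈ C_c(F¹)` and `f ∈ C_c(E⁰)`
    (ξ : Quotient (MulAction.orbitRel G E1) → ℂ)
    (hξc : Continuous ξ) (hξs : HasCompactSupport ξ)
    (f : E0 → ℂ) (hfc : Continuous f) (hfs : HasCompactSupport f) :
    -- `μ(ξ)·f ∈ C_c(E¹)`
    Continuous (fun e : E1 => ξ (Quotient.mk (MulAction.orbitRel G E1) e) * f (s e)) ∧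
    HasCompactSupport (fun e : E1 => ξ (Quotient.mk (MulAction.orbitRel G E1) e) * f (s e)) ∧
    -- the inner-product identity `⟨μ(ξ)·f, μ(ξ)·f⟩(v) = ⟨ξ,ξ⟩(q v) |f v|²`
    (∀ v : E0,
      (∑' e : {e : E1 // s e = v},
          ‖ξ (Quotient.mk (MulAction.orbitRel G E1) e.1) * f (s e.1)‖ ^ 2)
        = (∑' w : {w : Quotient (MulAction.orbitRel G E1) //
              sbar w = Quotient.mk (MulAction.orbitRel G E0) v}, ‖ξ w.1‖ ^ 2) * ‖f v‖ ^ 2) ∧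
    -- the norm inequality `‖μ(ξ)·f‖ ≤ ‖ξ‖ ‖f‖`
    (⨆ v : E0, Real.sqrt (∑' e : {e : E1 // s e = v},
        ‖ξ (Quotient.mk (MulAction.orbitRel G E1) e.1) * f (s e.1)‖ ^ 2))
      ≤ (⨆ w0 : Quotient (MulAction.orbitRel G E0),
          Real.sqrt (∑' w : {w : Quotient (MulAction.orbitRel G E1) // sbar w = w0},
            ‖ξ w.1‖ ^ 2)) * ⨆ v : E0, ‖f v‖ := by
  have : ContinuousSMul G E1 := ⟨hc1⟩
  have : ProperSMul G E0 := ⟨hprop0⟩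
  have hinner : ∀ v : E0, (∑' e : {e : E1 // s e = v}, ‖ξ (Quotient.mk _ e.1) * f (s e.1)‖ ^ 2)
      = (∑' w : {w // sbar w = Quotient.mk _ v}, ‖ξ w.1‖ ^ 2) * ‖f v‖ ^ 2 := fun v => by
    rw [tsum_quotient_fiber_eq hfree0 hseq hsbar (fun w => ‖ξ w‖ ^ 2), ← tsum_mul_right]
    exact tsum_congr fun e => by rw [e.2, norm_mul, mul_pow]
  obtain ⟨M, hM⟩ := exists_tsum_quotient_fiber_le hfree0 hs hseq hsbar
    (φ := fun w => ‖ξ w‖ ^ 2) (by fun_prop) (hξs.comp_left (g := fun z : ℂ => ‖z‖ ^ 2) (by simp))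
  refine ⟨(hξc.comp continuous_quotient_mk').mul (hfc.comp hs.continuous), ?_, hinner, ?_⟩
  · refine HasCompactSupport.intro' (isCompact_quotientMk_preimage_inter_preimage hs.continuous
      hseq (isClosed_tsupport ξ) hξs hfs) (((isClosed_tsupport ξ).preimage
      continuous_quotient_mk').inter ((isClosed_tsupport f).preimage hs.continuous)) ?_
    intro e he
    rcases not_and_or.1 he with h | h <;> simp [image_eq_zero_of_notMem_tsupport h]
  · calc _ = ⨆ v : E0, √(∑' w : {w // sbar w = Quotient.mk _ v}, ‖ξ w.1‖ ^ 2) * ‖f v‖ :=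
          iSup_congr fun v => by
            rw [hinner v, Real.sqrt_mul (tsum_nonneg fun _ => by positivity),
              Real.sqrt_sq (norm_nonneg _)]
      _ ≤ _ := Real.iSup_comp_mul_le_iSup_mul_iSup _
          (a := fun w₀ => √(∑' w : {w // sbar w = w₀}, ‖ξ w.1‖ ^ 2)) (fun _ => Real.sqrt_nonneg _)
          (fun _ => norm_nonneg _) ⟨√M, forall_mem_range.2 fun w₀ => Real.sqrt_le_sqrt (hM w₀)⟩
          (hfc.norm.bddAbove_range_of_hasCompactSupport hfs.norm)

/-- Let a locally compact group `G` act freely and properly on a topological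
graph `E`, with quotient graph `F = E/G` and quotient maps `q`.  For `ξ ∈ C_c(F¹)` and
`f ∈ C_c(E⁰)`, the formula `(μ(ξ)·f)(e) = ξ(q e) f(s e)` defines an element of `C_c(E¹)`,
and for every `v ∈ E⁰` one has `⟨μ(ξ)·f, μ(ξ)·f⟩(v) = ⟨ξ,ξ⟩(q v) |f v|²`; in particular
`‖μ(ξ)·f‖ ≤ ‖ξ‖ ‖f‖` for the Hilbert-module norms. -/
theorem stmt18 {G E0 E1 : Type*} [Group G] [TopologicalSpace G]
    [T2Space G] [LocallyCompactSpace G] [IsTopologicalGroup G]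
    [TopologicalSpace E0] [TopologicalSpace E1]
    [T2Space E0] [T2Space E1] [LocallyCompactSpace E0] [LocallyCompactSpace E1]
    [MulAction G E0] [MulAction G E1]
    (hc0 : Continuous fun p : G × E0 => p.1 • p.2)
    (hc1 : Continuous fun p : G × E1 => p.1 • p.2)
    (hfree0 : ∀ (g : G) (v : E0), g • v = v → g = 1)
    (hfree1 : ∀ (g : G) (e : E1), g • e = e → g = 1)
    (hprop0 : IsProperMap fun gp : G × E0 => (gp.1 • gp.2, gp.2))
    (hprop1 : IsProperMap fun gp : G × E1 => (gp.1 • gp.2, gp.2))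
    (s r : E1 → E0) (hs : IsLocalHomeomorph s) (hr : Continuous r)
    (hseq : ∀ (g : G) (e : E1), s (g • e) = g • s e)
    (hreq : ∀ (g : G) (e : E1), r (g • e) = g • r e)
    -- the induced source map of the quotient graph
    (sbar : Quotient (MulAction.orbitRel G E1) → Quotient (MulAction.orbitRel G E0))
    (hsbar : ∀ e : E1, sbar (Quotient.mk (MulAction.orbitRel G E1) e)
        = Quotient.mk (MulAction.orbitRel G E0) (s e))
    -- `ξ ∈ C_c(F¹)` and `f ∈ C_c(E⁰)`
    (ξ : Quotient (MulAction.orbitRel G E1) → ℂ)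
    (hξc : Continuous ξ) (hξs : HasCompactSupport ξ)
    (f : E0 → ℂ) (hfc : Continuous f) (hfs : HasCompactSupport f) :
    -- `μ(ξ)·f ∈ C_c(E¹)`
    Continuous (fun e : E1 => ξ (Quotient.mk (MulAction.orbitRel G E1) e) * f (s e)) ∧
    HasCompactSupport (fun e : E1 => ξ (Quotient.mk (MulAction.orbitRel G E1) e) * f (s e)) ∧
    -- the inner-product identity `⟨μ(ξ)·f, μ(ξ)·f⟩(v) = ⟨ξ,ξ⟩(q v) |f v|²`
    (∀ v : E0,
      (∑' e : {e : E1 // s e = v},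
          ‖ξ (Quotient.mk (MulAction.orbitRel G E1) e.1) * f (s e.1)‖ ^ 2)
        = (∑' w : {w : Quotient (MulAction.orbitRel G E1) //
              sbar w = Quotient.mk (MulAction.orbitRel G E0) v}, ‖ξ w.1‖ ^ 2) * ‖f v‖ ^ 2) ∧
    -- the norm inequality `‖μ(ξ)·f‖ ≤ ‖ξ‖ ‖f‖`
    (⨆ v : E0, Real.sqrt (∑' e : {e : E1 // s e = v},
        ‖ξ (Quotient.mk (MulAction.orbitRel G E1) e.1) * f (s e.1)‖ ^ 2))
      ≤ (⨆ w0 : Quotient (MulAction.orbitRel G E0),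
          Real.sqrt (∑' w : {w : Quotient (MulAction.orbitRel G E1) // sbar w = w0},
            ‖ξ w.1‖ ^ 2)) * ⨆ v : E0, ‖f v‖ :=
  stmt18_general hc1 hfree0 hprop0 s hs hseq sbar hsbar ξ hξc hξs f hfc hfs
end
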